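/- Let Q = #^p - #^q with q ≤ p ≤ 2q+1, p,q ≥ 1, and k ≥ 2. The maximal length L(k) of a binary word with exactly k zeros not detected by Q satisfies: L(k) = (ℓ+1)p + (k+1)q + ℓ if k = 2ℓ, and L(k) = (ℓ+2)p + kq + ℓ if k = 2ℓ+1, witnessed by the words (1^{p+q} 0 1^{q-1} 0)^ℓ 1^{p+q} and 1^{p-1} 0 (1^{p+q} 0 1^{q-1} 0)^ℓ 1^{p+q} respectively. -/

import Mathlib

/-- Number of zeros of word `w` among positions `0 .. m-1`. -/
def zerosIn (m : ℕ) (w : ℕ → Bool) : ℕ :=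
  ((Finset.range m).filter (fun j => w j = false)).card

/-- Seed `Q` matches word `w` of length `m` at position `i`. -/
def MatchesAt (Q : Finset ℕ) (m : ℕ) (w : ℕ → Bool) (i : ℕ) : Prop :=
  ∀ p ∈ Q, i + p < m ∧ w (i + p) = true

/-- Seed `Q` detects word `w` of length `m`. -/
def Detects (Q : Finset ℕ) (m : ℕ) (w : ℕ → Bool) : Prop :=
  ∃ i, MatchesAt Q m w i

/-- Seed `Q` solves the linear `(m,k)`-problem. -/
def Solves (Q : Finset ℕ) (m k : ℕ) : Prop :=
  ∀ w : ℕ → Bool, zerosIn m w ≤ k → Detects Q m w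

/-- A family of seeds solves the linear `(m,k)`-problem. -/
def FSolves (F : Set (Finset ℕ)) (m k : ℕ) : Prop :=
  ∀ w : ℕ → Bool, zerosIn m w ≤ k → ∃ Q ∈ F, Detects Q m w

/-- Seed `Q` solves the cyclic `(m,k)`-problem. -/
def CSolves (Q : Finset ℕ) (m k : ℕ) : Prop :=
  ∀ w : ℕ → Bool, zerosIn m w ≤ k →
    ∃ j < m, ∀ p ∈ Q, w ((j + p) % m) = true

/-- The seed `#^p - #^q` : matching positions `0..p-1` and `p+1..p+q`. -/
def Qpq (p q : ℕ) : Finset ℕ := Finset.range p ∪ Finset.Icc (p+1) (p+q)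

/-- The `k`-critical length of a seed: least `m` such that it solves the `(m,k)`-problem. -/
noncomputable def critLen (Q : Finset ℕ) (k : ℕ) : ℕ := sInf {m | Solves Q m k}

/-! The maximal length `L(k)` satisfies `L(0) = p+q`, `L(1) = 2p+q` and `L(k+2) = L(k) + p+2q+1`.
Scan an undetected word from the left: its leading run of ones has length at most `p+q`.
If it is shorter than `p`, cut after the first zero and recurse with `k-1` zeros, which costs at
most `p ≤ L(k) - L(k-1)` (this is where `p ≤ 2q+1` enters). Otherwise the first zero is the gap of
a window whose right part must contain the second zero, so that the first two zeros lie within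
`p+2q+1` positions and we recurse with `k-2` zeros. The witnesses are periodic of period
`p+2q+1`, and every window of the seed inside a period meets one of its two zeros. -/

section Words

lemma zerosIn_eq_sum (m : ℕ) (w : ℕ → Bool) :
    zerosIn m w = ∑ j ∈ Finset.range m, if w j = false then 1 else 0 :=
  Finset.card_filter _ _

lemma zerosIn_add (n m : ℕ) (w : ℕ → Bool) :
    zerosIn (n + m) w = zerosIn n w + zerosIn m (fun j => w (n + j)) := by
  simp only [zerosIn_eq_sum, Finset.sum_range_add]

lemma zerosIn_succ (n : ℕ) (w : ℕ → Bool) :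
    zerosIn (n + 1) w = zerosIn n w + if w n = false then 1 else 0 := by
  simp only [zerosIn_eq_sum, Finset.sum_range_succ]

lemma zerosIn_eq_zero_iff {m : ℕ} {w : ℕ → Bool} : zerosIn m w = 0 ↔ ∀ j < m, w j = true := by
  simp [zerosIn, Finset.filter_eq_empty_iff]

lemma exists_first_zero {m k : ℕ} {w : ℕ → Bool} (h : zerosIn m w = k + 1) :
    ∃ z m', m = z + 1 + m' ∧ (∀ j < z, w j = true) ∧ w z = false ∧
      zerosIn m' (fun j => w (z + 1 + j)) = k := by
  have hex : ∃ j, j < m ∧ w j = false := by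
    by_contra! hall
    have := zerosIn_eq_zero_iff.2 fun j hj => by simpa using hall j hj
    omega
  classical
  obtain ⟨hzm, hz⟩ := Nat.find_spec hex
  have hbefore : ∀ j < Nat.find hex, w j = true := fun j hj => by
    simpa [lt_trans hj hzm] using Nat.find_min hex hj
  refine ⟨Nat.find hex, m - Nat.find hex - 1, by omega, hbefore, hz, ?_⟩
  rw [show m = Nat.find hex + 1 + (m - Nat.find hex - 1) by omega, zerosIn_add, zerosIn_succ,
    zerosIn_eq_zero_iff.2 hbefore, if_pos hz] at h
  omega

lemma matchesAt_add_iff {Q : Finset ℕ} {n m i : ℕ} {w : ℕ → Bool} :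
    MatchesAt Q (n + m) w (n + i) ↔ MatchesAt Q m (fun j => w (n + j)) i := by
  simp only [MatchesAt, add_assoc, Nat.add_lt_add_iff_left]

lemma Detects.of_shift {Q : Finset ℕ} {n m : ℕ} {w : ℕ → Bool}
    (h : Detects Q m (fun j => w (n + j))) : Detects Q (n + m) w :=
  let ⟨i, hi⟩ := h
  ⟨n + i, matchesAt_add_iff.2 hi⟩

end Words

section Seed

variable {p q : ℕ}

lemma mem_Qpq {s : ℕ} : s ∈ Qpq p q ↔ s < p ∨ p < s ∧ s ≤ p + q := by
  simp [Qpq]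

lemma matchesAt_Qpq {m i : ℕ} {w : ℕ → Bool} (hm : i + p + q < m)
    (hleft : ∀ j, i ≤ j → j < i + p → w j = true)
    (hright : ∀ j, i + p < j → j ≤ i + p + q → w j = true) :
    MatchesAt (Qpq p q) m w i := by
  intro s hs
  rcases mem_Qpq.1 hs with hs | hs
  · exact ⟨by omega, hleft _ (by omega) (by omega)⟩
  · exact ⟨by omega, hright _ (by omega) (by omega)⟩

/-- The paper's `L(k)`. -/
def lengthBound (p q : ℕ) : ℕ → ℕ
  | 0 => p + q
  | 1 => 2 * p + q
  | k + 2 => lengthBound p q k + (p + 2 * q + 1)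

lemma lengthBound_add_le (hp : p ≤ 2 * q + 1) :
    ∀ k, lengthBound p q k + p ≤ lengthBound p q (k + 1)
  | 0 => by simp only [lengthBound]; omega
  | 1 => by simp only [lengthBound]; omega
  | k + 2 => by have := lengthBound_add_le hp k; simp only [lengthBound] at *; omega

lemma add_le_lengthBound : ∀ k, p + q ≤ lengthBound p q k
  | 0 => le_rfl
  | 1 => by simp only [lengthBound]; omega
  | k + 2 => by have := add_le_lengthBound k; simp only [lengthBound]; omega

lemma lengthBound_even (ℓ : ℕ) : lengthBound p q (2 * ℓ) = ℓ * (p + 2 * q + 1) + p + q := by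
  induction ℓ with
  | zero => simp [lengthBound]
  | succ ℓ ih => rw [Nat.mul_succ, lengthBound, ih]; ring

lemma lengthBound_odd (ℓ : ℕ) :
    lengthBound p q (2 * ℓ + 1) = p + (ℓ * (p + 2 * q + 1) + p + q) := by
  induction ℓ with
  | zero => simp [lengthBound]; ring
  | succ ℓ ih => rw [show 2 * (ℓ + 1) + 1 = 2 * ℓ + 1 + 2 by ring, lengthBound, ih]; ring

theorem le_lengthBound_of_not_detects (hqp : q ≤ p) (hp : p ≤ 2 * q + 1) (k : ℕ) :
    ∀ m (w : ℕ → Bool), zerosIn m w = k → ¬ Detects (Qpq p q) m w → m ≤ lengthBound p q k := by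
  induction k using Nat.strong_induction_on with
  | _ k ih =>
  intro m w hk hU
  rcases k with _ | k
  · by_contra! hm
    simp only [lengthBound] at hm
    have hones := zerosIn_eq_zero_iff.1 hk
    exact hU ⟨0, matchesAt_Qpq (by omega) (fun j _ _ => hones j (by omega))
      (fun j _ _ => hones j (by omega))⟩
  obtain ⟨z, m', rfl, hones, -, hk'⟩ := exists_first_zero hk
  have hU' : ¬ Detects (Qpq p q) m' (fun j => w (z + 1 + j)) := fun h => hU h.of_shift
  have hzle : z ≤ p + q := by
    by_contra! hz
    exact hU ⟨0, matchesAt_Qpq (by omega) (fun j _ _ => hones j (by omega))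
      (fun j _ _ => hones j (by omega))⟩
  rcases lt_or_ge z p with hzp | hzp
  · have := ih k (by omega) m' _ hk' hU'
    have := lengthBound_add_le hp k
    omega
  rcases lt_or_ge m' q with hm' | hm'
  · have := lengthBound_add_le hp k
    have := add_le_lengthBound (p := p) (q := q) k
    omega
  -- the first zero is the gap of the window starting at `z - p`
  have hsecond : ¬ ∀ j < q, w (z + 1 + j) = true := fun hright => hU
    ⟨z - p, matchesAt_Qpq (by omega) (fun j _ _ => hones j (by omega)) fun j _ _ => by
      obtain ⟨t, rfl⟩ : ∃ t, j = z + 1 + t := ⟨j - z - 1, by omega⟩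
      exact hright t (by omega)⟩
  rcases k with _ | k
  · exact (hsecond fun j hj => zerosIn_eq_zero_iff.1 hk' j (by omega)).elim
  obtain ⟨z', m'', rfl, hones', -, hk''⟩ := exists_first_zero hk'
  have hz' : z' < q := by
    by_contra! hz'
    exact hsecond fun j hj => hones' j (by omega)
  have := ih k (by omega) m'' _ hk'' fun h => hU' h.of_shift
  simp only [lengthBound]
  omega

end Seed

section Witnesses

variable {p q : ℕ}

lemma exists_mem_Qpq_add_eq (hq : 1 ≤ q) (hqp : q ≤ p) {o : ℕ} (ho : o < p + 2 * q + 1) :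
    ∃ s ∈ Qpq p q, o + s = p + q ∨ o + s = p + 2 * q := by
  simp only [mem_Qpq]
  rcases lt_or_ge o q with h | h
  · exact ⟨p + q - o, by omega, by omega⟩
  rcases lt_or_ge o (2 * q) with h | h
  · exact ⟨p + 2 * q - o, by omega, by omega⟩
  rcases h.eq_or_lt with rfl | h
  · exact ⟨p - q, by omega, by omega⟩
  · exact ⟨p + 2 * q - o, by omega, by omega⟩

def evenWitness (p q ℓ : ℕ) (j : ℕ) : Bool :=
  decide (¬ ∃ t, t < ℓ ∧ (j = t*(p+2*q+1)+p+q ∨ j = t*(p+2*q+1)+p+2*q))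

def oddWitness (p q ℓ : ℕ) (j : ℕ) : Bool :=
  decide (¬ (j = p - 1 ∨ ∃ t, t < ℓ ∧ (j = p+t*(p+2*q+1)+p+q ∨ j = p+t*(p+2*q+1)+p+2*q)))

lemma oddWitness_add (hp : 1 ≤ p) (ℓ j : ℕ) : oddWitness p q ℓ (p + j) = evenWitness p q ℓ j := by
  simp only [oddWitness, evenWitness, add_assoc, Nat.add_left_cancel_iff]
  congr 2
  simp only [eq_iff_iff, or_iff_right_iff_imp]
  omega

lemma zerosIn_evenWitness (hq : 1 ≤ q) (ℓ : ℕ) :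
    zerosIn (ℓ * (p + 2 * q + 1) + p + q) (evenWitness p q ℓ) = 2 * ℓ := by
  have hzeros : (Finset.range (ℓ * (p + 2 * q + 1) + p + q)).filter (evenWitness p q ℓ · = false)
      = (Finset.range ℓ ×ˢ {p + q, p + 2 * q}).image (fun x => x.1 * (p + 2 * q + 1) + x.2) := by
    ext j
    simp only [evenWitness, Finset.mem_filter, Finset.mem_range, decide_eq_false_iff_not, not_not,
      Finset.mem_image, Finset.mem_product, Finset.mem_insert, Finset.mem_singleton, Prod.exists]
    constructor
    · rintro ⟨-, t, ht, rfl | rfl⟩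
      exacts [⟨t, _, ⟨ht, .inl rfl⟩, by ring⟩, ⟨t, _, ⟨ht, .inr rfl⟩, by ring⟩]
    · rintro ⟨t, c, ⟨ht, hc⟩, rfl⟩
      have := Nat.mul_le_mul_right (p + 2 * q + 1) (Nat.succ_le_of_lt ht)
      rw [Nat.succ_mul] at this
      exact ⟨by omega, t, ht, by omega⟩
  have hinj : Set.InjOn (fun x : ℕ × ℕ => x.1 * (p + 2 * q + 1) + x.2)
      (Finset.range ℓ ×ˢ {p + q, p + 2 * q} : Finset _) := by
    rintro ⟨t, c⟩ htc ⟨s, d⟩ hsd h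
    simp only [Finset.coe_product, Set.mem_prod, Finset.coe_insert, Finset.coe_singleton,
      Set.mem_insert_iff, Set.mem_singleton_iff] at htc hsd h
    have hc : c < p + 2 * q + 1 := by omega
    have hd : d < p + 2 * q + 1 := by omega
    have hdiv := congrArg (· / (p + 2 * q + 1)) h
    have hmod := congrArg (· % (p + 2 * q + 1)) h
    simp only [Nat.add_comm (_ * _), Nat.add_mul_div_right _ _ (by omega : 0 < p + 2 * q + 1),
      Nat.add_mul_mod_self_right, Nat.div_eq_of_lt hc, Nat.div_eq_of_lt hd, Nat.mod_eq_of_lt hc,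
      Nat.mod_eq_of_lt hd, zero_add] at hdiv hmod
    rw [hdiv, hmod]
  rw [zerosIn, hzeros, Finset.card_image_of_injOn hinj, Finset.card_product, Finset.card_range,
    Finset.card_pair (by omega), mul_comm]

lemma not_detects_evenWitness (hq : 1 ≤ q) (hqp : q ≤ p) (ℓ : ℕ) :
    ¬ Detects (Qpq p q) (ℓ * (p + 2 * q + 1) + p + q) (evenWitness p q ℓ) := by
  rintro ⟨i, hi⟩
  have hiℓ : i < ℓ * (p + 2 * q + 1) := by
    have := (hi (p + q) (mem_Qpq.2 (.inr ⟨by omega, le_rfl⟩))).1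
    omega
  have hP : 0 < p + 2 * q + 1 := by omega
  obtain ⟨s, hs, hzero⟩ := exists_mem_Qpq_add_eq hq hqp (Nat.mod_lt i hP)
  have hblock : i / (p + 2 * q + 1) < ℓ := (Nat.div_lt_iff_lt_mul hP).2 hiℓ
  have hdecomp := Nat.div_add_mod' i (p + 2 * q + 1)
  have := (hi s hs).2
  simp only [evenWitness, decide_eq_true_eq] at this
  exact this ⟨_, hblock, by omega⟩

lemma zerosIn_oddWitness (hq : 1 ≤ q) (hqp : q ≤ p) (ℓ : ℕ) :
    zerosIn (p + (ℓ * (p + 2 * q + 1) + p + q)) (oddWitness p q ℓ) = 2 * ℓ + 1 := by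
  have hprefix : zerosIn p (oddWitness p q ℓ) = 1 := by
    rw [show p = p - 1 + 1 by omega, zerosIn_succ, zerosIn_eq_zero_iff.2 fun j hj => ?_]
    · simp [oddWitness]
    · simp only [oddWitness, decide_eq_true_eq]
      omega
  rw [zerosIn_add, hprefix, funext (oddWitness_add (by omega) ℓ), zerosIn_evenWitness hq]
  ring

lemma not_detects_oddWitness (hq : 1 ≤ q) (hqp : q ≤ p) (ℓ : ℕ) :
    ¬ Detects (Qpq p q) (p + (ℓ * (p + 2 * q + 1) + p + q)) (oddWitness p q ℓ) := by
  rintro ⟨i, hi⟩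
  rcases lt_or_ge i p with hip | hip
  · have := (hi (p - 1 - i) (mem_Qpq.2 (.inl (by omega)))).2
    simp only [oddWitness, decide_eq_true_eq] at this
    exact this (.inl (by omega))
  · obtain ⟨i, rfl⟩ : ∃ i', i = p + i' := ⟨i - p, by omega⟩
    rw [matchesAt_add_iff, funext (oddWitness_add (by omega) ℓ)] at hi
    exact not_detects_evenWitness hq hqp ℓ ⟨i, hi⟩

end Witnesses

theorem stmt5_general (p q ℓ : ℕ) (hq : 1 ≤ q) (hqp : q ≤ p) (hp : p ≤ 2*q+1) :
    -- even case : k = 2ℓ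
    (zerosIn ((ℓ+1)*p+(2*ℓ+1)*q+ℓ)
        (fun j => decide (¬ ∃ t, t < ℓ ∧ (j = t*(p+2*q+1)+p+q ∨ j = t*(p+2*q+1)+p+2*q))) = 2*ℓ ∧
      ¬ Detects (Qpq p q) ((ℓ+1)*p+(2*ℓ+1)*q+ℓ)
        (fun j => decide (¬ ∃ t, t < ℓ ∧ (j = t*(p+2*q+1)+p+q ∨ j = t*(p+2*q+1)+p+2*q))) ∧
      ∀ m : ℕ, ∀ w : ℕ → Bool, zerosIn m w = 2*ℓ → ¬ Detects (Qpq p q) m w →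
        m ≤ (ℓ+1)*p+(2*ℓ+1)*q+ℓ) ∧
    -- odd case : k = 2ℓ+1
    (zerosIn ((ℓ+2)*p+(2*ℓ+1)*q+ℓ)
        (fun j => decide (¬ (j = p - 1 ∨
          ∃ t, t < ℓ ∧ (j = p+t*(p+2*q+1)+p+q ∨ j = p+t*(p+2*q+1)+p+2*q)))) = 2*ℓ+1 ∧
      ¬ Detects (Qpq p q) ((ℓ+2)*p+(2*ℓ+1)*q+ℓ)
        (fun j => decide (¬ (j = p - 1 ∨
          ∃ t, t < ℓ ∧ (j = p+t*(p+2*q+1)+p+q ∨ j = p+t*(p+2*q+1)+p+2*q)))) ∧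
      ∀ m : ℕ, ∀ w : ℕ → Bool, zerosIn m w = 2*ℓ+1 → ¬ Detects (Qpq p q) m w →
        m ≤ (ℓ+2)*p+(2*ℓ+1)*q+ℓ) := by
  have hevenLen : (ℓ+1)*p+(2*ℓ+1)*q+ℓ = lengthBound p q (2 * ℓ) := by
    rw [lengthBound_even]; ring
  have hoddLen : (ℓ+2)*p+(2*ℓ+1)*q+ℓ = lengthBound p q (2 * ℓ + 1) := by
    rw [lengthBound_odd]; ring
  refine ⟨⟨?_, ?_, fun m w hk hU => ?_⟩, ?_, ?_, fun m w hk hU => ?_⟩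
  · rw [hevenLen, lengthBound_even]; exact zerosIn_evenWitness hq ℓ
  · rw [hevenLen, lengthBound_even]; exact not_detects_evenWitness hq hqp ℓ
  · rw [hevenLen]; exact le_lengthBound_of_not_detects hqp hp _ m w hk hU
  · rw [hoddLen, lengthBound_odd]; exact zerosIn_oddWitness hq hqp ℓ
  · rw [hoddLen, lengthBound_odd]; exact not_detects_oddWitness hq hqp ℓ
  · rw [hoddLen]; exact le_lengthBound_of_not_detects hqp hp _ m w hk hU

/-- for `q ≤ p ≤ 2q+1`, `q ≥ 1` and `k ≥ 2`, the maximal length `L(k)` of a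
word with exactly `k` zeros not detected by `#^p - #^q` is `(ℓ+1)p+(k+1)q+ℓ` for `k = 2ℓ`
and `(ℓ+2)p+kq+ℓ` for `k = 2ℓ+1`, witnessed by `(1^{p+q} 0 1^{q-1} 0)^ℓ 1^{p+q}` and
`1^{p-1} 0 (1^{p+q} 0 1^{q-1} 0)^ℓ 1^{p+q}` respectively. -/
theorem stmt5 (p q ℓ : ℕ) (hq : 1 ≤ q) (hqp : q ≤ p) (hp : p ≤ 2*q+1) (hℓ : 1 ≤ ℓ) :
    -- even case : k = 2ℓ
    (zerosIn ((ℓ+1)*p+(2*ℓ+1)*q+ℓ)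
        (fun j => decide (¬ ∃ t, t < ℓ ∧ (j = t*(p+2*q+1)+p+q ∨ j = t*(p+2*q+1)+p+2*q))) = 2*ℓ ∧
      ¬ Detects (Qpq p q) ((ℓ+1)*p+(2*ℓ+1)*q+ℓ)
        (fun j => decide (¬ ∃ t, t < ℓ ∧ (j = t*(p+2*q+1)+p+q ∨ j = t*(p+2*q+1)+p+2*q))) ∧
      ∀ m : ℕ, ∀ w : ℕ → Bool, zerosIn m w = 2*ℓ → ¬ Detects (Qpq p q) m w →
        m ≤ (ℓ+1)*p+(2*ℓ+1)*q+ℓ) ∧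
    -- odd case : k = 2ℓ+1
    (zerosIn ((ℓ+2)*p+(2*ℓ+1)*q+ℓ)
        (fun j => decide (¬ (j = p - 1 ∨
          ∃ t, t < ℓ ∧ (j = p+t*(p+2*q+1)+p+q ∨ j = p+t*(p+2*q+1)+p+2*q)))) = 2*ℓ+1 ∧
      ¬ Detects (Qpq p q) ((ℓ+2)*p+(2*ℓ+1)*q+ℓ)
        (fun j => decide (¬ (j = p - 1 ∨
          ∃ t, t < ℓ ∧ (j = p+t*(p+2*q+1)+p+q ∨ j = p+t*(p+2*q+1)+p+2*q)))) ∧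
      ∀ m : ℕ, ∀ w : ℕ → Bool, zerosIn m w = 2*ℓ+1 → ¬ Detects (Qpq p q) m w →
        m ≤ (ℓ+2)*p+(2*ℓ+1)*q+ℓ) :=
  stmt5_general p q ℓ hq hqp hp
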